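/- arXiv:2510.21110 — 5 statements merged into one kernel-verified Lean document; each statement's English description precedes it below -/
import Mathlib

section
/- In a confounded MDP with rewards in [a,b], for any bounded function Q : S × X → ℝ, the interventional next-state value satisfies the lower bound: Σ_{s'} T(s,x,s')·max_{x'} Q(s',x') ≥ P(x|s)·Σ_{s'} T̃(s,x,s')·max_{x'} Q(s',x') + P(¬x|s)·min_{s'} max_{x'} Q(s',x'), where T is the interventional transition kernel and T̃ the observational (nominal) transition kernel. -/
open Finset

/-- lower bound on the interventional next-state value.
In a confounded MDP with transition function `fS` and behavioral policy `fX`,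
for any function `Q : S × X → ℝ`,
`Σ_{s'} T(s,x,s')·max_{x'} Q(s',x')
  ≥ P(x|s)·Σ_{s'} T̃(s,x,s')·max_{x'} Q(s',x') + (1 − P(x|s))·min_{s'} max_{x'} Q(s',x')`,
where `T(s,x,s') = P(fS(s,x,U)=s')` is the interventional transition kernel and
`T̃(s,x,s') = P(fS(s,x,U)=s' ∣ fX(s,U)=x)` the observational (nominal) kernel. -/
theorem interventional_transition_value_lower_bound
    {S X U : Type*} [Fintype S] [Fintype X] [Fintype U] [Nonempty S] [Nonempty X]
    [DecidableEq S] [DecidableEq X]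
    (μ : U → ℝ) (hμ0 : ∀ u, 0 ≤ μ u) (hμ1 : ∑ u, μ u = 1)
    (fS : S → X → U → S) (fX : S → U → X)
    (Pb : S → X → ℝ) (hPb : ∀ s x, Pb s x = ∑ u, if fX s u = x then μ u else 0)
    (hPbpos : ∀ s x, 0 < Pb s x)
    -- interventional transition kernel `T(s,x,s') = P(fS(s,x,U)=s')`
    (T : S → X → S → ℝ) (hT : ∀ s x s', T s x s' = ∑ u, if fS s x u = s' then μ u else 0)
    -- observational transition kernel `T̃(s,x,s') = P(fS(s,x,U)=s' ∣ fX(s,U)=x)`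
    (Ttil : S → X → S → ℝ)
    (hTtil : ∀ s x s',
      Ttil s x s' = (∑ u, if fS s x u = s' ∧ fX s u = x then μ u else 0) / Pb s x)
    (Q : S → X → ℝ) :
    ∀ s x, (∑ s', T s x s' * (⨆ x', Q s' x'))
      ≥ Pb s x * (∑ s', Ttil s x s' * (⨆ x', Q s' x'))
        + (1 - Pb s x) * (⨅ s', ⨆ x', Q s' x') := by

  intro s x
  set M : S → ℝ := fun s' => ⨆ x', Q s' x' with hM
  have hm : ∀ s', (⨅ s', M s') ≤ M s' := fun s' =>
    ciInf_le (Set.Finite.bddBelow (Set.finite_range M)) s'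
  set A : S → ℝ := fun s' => ∑ u, if fS s x u = s' ∧ fX s u = x then μ u else 0 with hA
  set B : S → ℝ := fun s' => ∑ u, if fS s x u = s' ∧ fX s u ≠ x then μ u else 0 with hB
  have hB0 : ∀ s', 0 ≤ B s' := by
    intro s'
    apply Finset.sum_nonneg
    intro u _
    split <;> simp [hμ0 u]
  have hTsplit : ∀ s', T s x s' = A s' + B s' := by
    intro s'
    rw [hT, hA, hB]
    simp only
    rw [← Finset.sum_add_distrib]
    apply Finset.sum_congr rfl
    intro u _
    by_cases h1 : fS s x u = s' <;> by_cases h2 : fX s u = x <;> simp [h1, h2]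
  have hAT : ∀ s', A s' = Pb s x * Ttil s x s' := by
    intro s'
    rw [hTtil, hA]
    field_simp [(hPbpos s x).ne']
  have hBsum : ∑ s', B s' = 1 - Pb s x := by
    rw [hB]
    simp only
    rw [Finset.sum_comm]
    have h1 : ∀ u ∈ Finset.univ (α := U),
        (∑ s', if fS s x u = s' ∧ fX s u ≠ x then μ u else 0)
        = if fX s u = x then 0 else μ u := by
      intro u _
      by_cases h : fX s u = x <;> simp [h, Finset.sum_ite_eq]
    rw [Finset.sum_congr rfl h1, hPb s x]
    rw [← hμ1, ← Finset.sum_sub_distrib]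
    apply Finset.sum_congr rfl
    intro u _
    by_cases h : fX s u = x <;> simp [h]
  have key : ∑ s', B s' * M s' ≥ (1 - Pb s x) * (⨅ s', M s') := by
    rw [← hBsum, Finset.sum_mul]
    apply Finset.sum_le_sum
    intro s' _
    exact mul_le_mul_of_nonneg_left (hm s') (hB0 s')
  calc ∑ s', T s x s' * M s' = ∑ s', (A s' * M s' + B s' * M s') := by
        apply Finset.sum_congr rfl
        intro s' _
        rw [hTsplit s', add_mul]
    _ = (∑ s', A s' * M s') + ∑ s', B s' * M s' := Finset.sum_add_distrib
    _ ≥ (∑ s', A s' * M s') + (1 - Pb s x) * (⨅ s', M s') := by linarith [key]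
    _ = Pb s x * (∑ s', Ttil s x s' * M s') + (1 - Pb s x) * (⨅ s', M s') := by
        rw [Finset.mul_sum]
        congr 1
        apply Finset.sum_congr rfl
        intro s' _
        rw [hAT s', mul_assoc]
end

section
/- The Causal Bellman Optimality operator T, defined on functions Q : S × X → ℝ by (TQ)(s,x) = P(x|s)·(R̃(s,x) + γ·Σ_{s'} T̃(s,x,s')·max_{x'} Q(s',x')) + P(¬x|s)·(a + γ·min_{s'} max_{x'} Q(s',x')), is a γ-contraction with respect to the supremum norm: for all bounded Q¹, Q², ‖TQ¹ − TQ²‖_∞ ≤ γ·‖Q¹ − Q²‖_∞. -/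
open Finset

/-- The Causal Bellman Optimality operator:
`(T Q)(s,x) = P(x|s)·(R̃(s,x) + γ·Σ_{s'} T̃(s,x,s')·max_{x'} Q(s',x'))
            + (1 − P(x|s))·(a + γ·min_{s'} max_{x'} Q(s',x'))`. -/
noncomputable def causalOp {S X : Type*} [Fintype S] [Fintype X] [Nonempty S] [Nonempty X]
    (γ a : ℝ) (P : S → X → ℝ) (R : S → X → ℝ) (T : S → X → S → ℝ)
    (Q : S → X → ℝ) : S → X → ℝ := fun s x =>
  P s x * (R s x + γ * ∑ s', T s x s' * (⨆ x', Q s' x'))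
    + (1 - P s x) * (a + γ * ⨅ s', ⨆ x', Q s' x')

/-- the Causal Bellman Optimality operator is a `γ`-contraction
with respect to the supremum norm. -/
theorem causalOp_contraction {S X : Type*} [Fintype S] [Fintype X] [Nonempty S] [Nonempty X]
    (γ a : ℝ) (hγ0 : 0 ≤ γ) (hγ1 : γ < 1)
    (P : S → X → ℝ) (R : S → X → ℝ) (T : S → X → S → ℝ)
    (hPpos : ∀ s x, 0 ≤ P s x) (hPsum : ∀ s, ∑ x, P s x = 1)
    (hTpos : ∀ s x s', 0 ≤ T s x s') (hTsum : ∀ s x, ∑ s', T s x s' = 1)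
    (Q₁ Q₂ : S → X → ℝ) :
    (⨆ p : S × X, |causalOp γ a P R T Q₁ p.1 p.2 - causalOp γ a P R T Q₂ p.1 p.2|)
      ≤ γ * ⨆ p : S × X, |Q₁ p.1 p.2 - Q₂ p.1 p.2| := by
  set M : ℝ := ⨆ p : S × X, |Q₁ p.1 p.2 - Q₂ p.1 p.2| with hMdef
  have hM : ∀ s x, |Q₁ s x - Q₂ s x| ≤ M := fun s x =>
    le_ciSup (f := fun p : S × X => |Q₁ p.1 p.2 - Q₂ p.1 p.2|) (Set.Finite.bddAbove (Set.finite_range _)) (⟨s, x⟩ : S × X)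
  have hM0 : 0 ≤ M := le_trans (abs_nonneg _) (hM (Classical.arbitrary S) (Classical.arbitrary X))
  -- sup difference bound
  have hsup : ∀ s', |(⨆ x', Q₁ s' x') - ⨆ x', Q₂ s' x'| ≤ M := by
    intro s'
    rw [abs_sub_le_iff]
    constructor
    · rw [sub_le_iff_le_add]
      refine ciSup_le fun x => ?_
      have h1 := abs_le.mp (hM s' x)
      have h2 : Q₂ s' x ≤ ⨆ x', Q₂ s' x' :=
        le_ciSup (Set.Finite.bddAbove (Set.finite_range _)) x
      linarith [h1.2]
    · rw [sub_le_iff_le_add]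
      refine ciSup_le fun x => ?_
      have h1 := abs_le.mp (hM s' x)
      have h2 : Q₁ s' x ≤ ⨆ x', Q₁ s' x' :=
        le_ciSup (Set.Finite.bddAbove (Set.finite_range _)) x
      linarith [h1.1]
  -- inf difference bound
  have hinf : |(⨅ s', ⨆ x', Q₁ s' x') - ⨅ s', ⨆ x', Q₂ s' x'| ≤ M := by
    rw [abs_sub_le_iff]
    constructor
    · have key : (⨅ s', ⨆ x', Q₁ s' x') - M ≤ ⨅ s', ⨆ x', Q₂ s' x' := by
        refine le_ciInf fun s' => ?_
        have h1 : (⨅ s', ⨆ x', Q₁ s' x') ≤ ⨆ x', Q₁ s' x' :=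
          ciInf_le (Set.Finite.bddBelow (Set.finite_range _)) s'
        have h2 := abs_le.mp (hsup s')
        linarith [h2.2]
      linarith
    · have key : (⨅ s', ⨆ x', Q₂ s' x') - M ≤ ⨅ s', ⨆ x', Q₁ s' x' := by
        refine le_ciInf fun s' => ?_
        have h1 : (⨅ s', ⨆ x', Q₂ s' x') ≤ ⨆ x', Q₂ s' x' :=
          ciInf_le (Set.Finite.bddBelow (Set.finite_range _)) s'
        have h2 := abs_le.mp (hsup s')
        linarith [h2.1]
      linarith
  refine ciSup_le fun p => ?_
  obtain ⟨s, x⟩ := p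
  have hP1 : P s x ≤ 1 := by
    have := Finset.single_le_sum (f := P s) (fun y _ => hPpos s y) (Finset.mem_univ x)
    rw [hPsum s] at this; exact this
  -- bound the sum difference
  have hsum : |(∑ s', T s x s' * (⨆ x', Q₁ s' x')) - ∑ s', T s x s' * (⨆ x', Q₂ s' x')| ≤ M := by
    rw [← Finset.sum_sub_distrib]
    refine le_trans (Finset.abs_sum_le_sum_abs _ _) ?_
    calc ∑ s', |T s x s' * (⨆ x', Q₁ s' x') - T s x s' * (⨆ x', Q₂ s' x')|
        ≤ ∑ s', T s x s' * M := by
          refine Finset.sum_le_sum fun s' _ => ?_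
          rw [← mul_sub, abs_mul, abs_of_nonneg (hTpos s x s')]
          exact mul_le_mul_of_nonneg_left (hsup s') (hTpos s x s')
      _ = M := by rw [← Finset.sum_mul, hTsum, one_mul]
  have key : causalOp γ a P R T Q₁ s x - causalOp γ a P R T Q₂ s x
      = P s x * γ * ((∑ s', T s x s' * (⨆ x', Q₁ s' x')) - ∑ s', T s x s' * (⨆ x', Q₂ s' x'))
        + (1 - P s x) * γ * ((⨅ s', ⨆ x', Q₁ s' x') - ⨅ s', ⨆ x', Q₂ s' x') := by
    simp only [causalOp]; ring
  rw [key]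
  calc |P s x * γ * ((∑ s', T s x s' * (⨆ x', Q₁ s' x')) - ∑ s', T s x s' * (⨆ x', Q₂ s' x'))
        + (1 - P s x) * γ * ((⨅ s', ⨆ x', Q₁ s' x') - ⨅ s', ⨆ x', Q₂ s' x')|
      ≤ P s x * γ * M + (1 - P s x) * γ * M := by
        refine le_trans (abs_add_le _ _) (add_le_add ?_ ?_)
        · rw [abs_mul, abs_of_nonneg (mul_nonneg (hPpos s x) hγ0)]
          exact mul_le_mul_of_nonneg_left hsum (mul_nonneg (hPpos s x) hγ0)
        · rw [abs_mul, abs_of_nonneg (mul_nonneg (by linarith) hγ0)]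
          exact mul_le_mul_of_nonneg_left hinf (mul_nonneg (by linarith) hγ0)
    _ = γ * M := by ring
end

section
/- Consider a standard finite MDP with interventional reward R : S × X → [a,b], interventional transition kernel T, and discount γ ∈ [0,1), whose optimal Q-function Q* is the unique fixed point of the standard Bellman optimality operator. Suppose the nominal quantities satisfy the pointwise bounds R(s,x) ≥ P(x|s)·R̃(s,x) + a·P(¬x|s) and Σ_{s'} T(s,x,s')·max_{x'} Q(s',x') ≥ P(x|s)·Σ_{s'} T̃(s,x,s')·max_{x'} Q(s',x') + P(¬x|s)·min_{s'} max_{x'} Q(s',x') for every bounded Q with Q ≤ Q* pointwise. Then the unique fixed point Q̲* of the Causal Bellman Optimality operator satisfies Q̲*(s,x) ≤ Q*(s,x) for all (s,x). -/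
open Finset

/-- The standard Bellman optimality operator:
`(B Q)(s,x) = R(s,x) + γ·Σ_{s'} T(s,x,s')·max_{x'} Q(s',x')`. -/
noncomputable def bellmanOp {S X : Type*} [Fintype S] [Fintype X] [Nonempty X]
    (γ : ℝ) (R : S → X → ℝ) (T : S → X → S → ℝ) (Q : S → X → ℝ) : S → X → ℝ := fun s x =>
  R s x + γ * ∑ s', T s x s' * (⨆ x', Q s' x')

/-- if the interventional reward and transition-value terms dominate the
Manski-style nominal lower bounds (the latter for every `Q ≤ Q*`), then the unique fixed
point `Q̲*` of the Causal Bellman Optimality operator lower-bounds the optimal `Q*`,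
the unique fixed point of the standard Bellman optimality operator. -/
theorem causal_fixed_point_le_optimal
    {S X : Type*} [Fintype S] [Fintype X] [Nonempty S] [Nonempty X]
    (γ a b : ℝ) (hγ0 : 0 ≤ γ) (hγ1 : γ < 1) (hab : a ≤ b)
    (P : S → X → ℝ) (Rtil : S → X → ℝ) (Ttil : S → X → S → ℝ)
    (R : S → X → ℝ) (T : S → X → S → ℝ)
    (hRa : ∀ s x, a ≤ R s x) (hRb : ∀ s x, R s x ≤ b)
    (hPpos : ∀ s x, 0 ≤ P s x) (hPsum : ∀ s, ∑ x, P s x = 1)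
    (hTpos : ∀ s x s', 0 ≤ T s x s') (hTsum : ∀ s x, ∑ s', T s x s' = 1)
    (hTtilpos : ∀ s x s', 0 ≤ Ttil s x s') (hTtilsum : ∀ s x, ∑ s', Ttil s x s' = 1)
    -- `Q*`: the unique fixed point of the standard Bellman optimality operator
    (Qstar : S → X → ℝ) (hQstar : bellmanOp γ R T Qstar = Qstar)
    -- `Q̲*`: the unique fixed point of the Causal Bellman Optimality operator
    (Qlow : S → X → ℝ) (hQlow : causalOp γ a P Rtil Ttil Qlow = Qlow)
    -- reward lower bound: `R(s,x) ≥ P(x|s)·R̃(s,x) + a·(1 − P(x|s))`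
    (hRbound : ∀ s x, R s x ≥ P s x * Rtil s x + a * (1 - P s x))
    -- transition-value lower bound for every `Q ≤ Q*` pointwise
    (hTbound : ∀ Q : S → X → ℝ, (∀ s x, Q s x ≤ Qstar s x) →
      ∀ s x, (∑ s', T s x s' * (⨆ x', Q s' x'))
        ≥ P s x * (∑ s', Ttil s x s' * (⨆ x', Q s' x'))
          + (1 - P s x) * (⨅ s', ⨆ x', Q s' x')) :
    ∀ s x, Qlow s x ≤ Qstar s x := by
  classical
  have hP1 : ∀ s x, P s x ≤ 1 := by
    intro s x
    calc P s x ≤ ∑ x', P s x' :=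
          Finset.single_le_sum (fun i _ => hPpos s i) (Finset.mem_univ x)
      _ = 1 := hPsum s
  have hbddS : ∀ (Q : S → X → ℝ) (s' : S), BddAbove (Set.range (Q s')) :=
    fun Q s' => (Set.finite_range _).bddAbove
  have hbddI : ∀ (f : S → ℝ), BddBelow (Set.range f) :=
    fun f => (Set.finite_range f).bddBelow
  set d : ℝ := (Finset.univ : Finset (S × X)).sup' Finset.univ_nonempty
      (fun p => Qlow p.1 p.2 - Qstar p.1 p.2) with hd
  have hle : ∀ s x, Qlow s x - Qstar s x ≤ d := fun s x =>
    Finset.le_sup' (f := fun p : S × X => Qlow p.1 p.2 - Qstar p.1 p.2)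
      (Finset.mem_univ (s, x))
  have hsup : ∀ s', (⨆ x', Qlow s' x') ≤ (⨆ x', Qstar s' x') + d := by
    intro s'
    apply ciSup_le
    intro x'
    have h1 := hle s' x'
    have h2 : Qstar s' x' ≤ ⨆ x'', Qstar s' x'' := le_ciSup (hbddS Qstar s') x'
    linarith
  have hinf : (⨅ s', ⨆ x', Qlow s' x') ≤ (⨅ s', ⨆ x', Qstar s' x') + d := by
    obtain ⟨s₀, hs₀⟩ := Finite.exists_min (fun s' : S => ⨆ x', Qstar s' x')
    have h1 : (⨅ s', ⨆ x', Qlow s' x') ≤ ⨆ x', Qlow s₀ x' :=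
      ciInf_le (hbddI _) s₀
    have h2 : (⨅ s', ⨆ x', Qstar s' x') = ⨆ x', Qstar s₀ x' :=
      le_antisymm (ciInf_le (hbddI _) s₀) (le_ciInf hs₀)
    have h3 := hsup s₀
    linarith
  have hsumtil : ∀ s x, ∑ s', Ttil s x s' * (⨆ x', Qlow s' x')
      ≤ (∑ s', Ttil s x s' * (⨆ x', Qstar s' x')) + d := by
    intro s x
    have h1 : ∑ s', Ttil s x s' * (⨆ x', Qlow s' x')
        ≤ ∑ s', Ttil s x s' * ((⨆ x', Qstar s' x') + d) :=
      Finset.sum_le_sum (fun s' _ =>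
        mul_le_mul_of_nonneg_left (hsup s') (hTtilpos s x s'))
    have h2 : ∑ s', Ttil s x s' * ((⨆ x', Qstar s' x') + d)
        = (∑ s', Ttil s x s' * (⨆ x', Qstar s' x')) + d := by
      simp [mul_add, Finset.sum_add_distrib, ← Finset.sum_mul, hTtilsum s x]
    linarith
  -- causalOp at Qstar is dominated by Qstar
  have hcs : ∀ s x, causalOp γ a P Rtil Ttil Qstar s x ≤ Qstar s x := by
    intro s x
    have hT := hTbound Qstar (fun s x => le_refl _) s x
    have hR := hRbound s x
    have hB : R s x + γ * ∑ s', T s x s' * (⨆ x', Qstar s' x') = Qstar s x := by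
      have := congrFun (congrFun hQstar s) x
      simpa [bellmanOp] using this
    have hkey : causalOp γ a P Rtil Ttil Qstar s x
        = (P s x * Rtil s x + a * (1 - P s x))
          + γ * (P s x * (∑ s', Ttil s x s' * (⨆ x', Qstar s' x'))
              + (1 - P s x) * (⨅ s', ⨆ x', Qstar s' x')) := by
      simp only [causalOp]; ring
    have hγT := mul_le_mul_of_nonneg_left hT hγ0
    linarith
  -- main contraction step at the maximizer of Qlow - Qstar
  obtain ⟨p, -, hp⟩ := Finset.exists_mem_eq_sup' (Finset.univ_nonempty)
    (fun p : S × X => Qlow p.1 p.2 - Qstar p.1 p.2)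
  have hdle : d ≤ γ * d := by
    obtain ⟨s, x⟩ := p
    have hfix : causalOp γ a P Rtil Ttil Qlow s x = Qlow s x :=
      congrFun (congrFun hQlow s) x
    have h1 := hsumtil s x
    have h2 := hinf
    have hstep : Qlow s x ≤ causalOp γ a P Rtil Ttil Qstar s x + γ * d := by
      rw [← hfix]
      simp only [causalOp]
      have e1 := mul_le_mul_of_nonneg_left (mul_le_mul_of_nonneg_left h1 hγ0) (hPpos s x)
      have e2 := mul_le_mul_of_nonneg_left (mul_le_mul_of_nonneg_left h2 hγ0)
        (sub_nonneg.mpr (hP1 s x))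
      nlinarith [e1, e2]
    have h3 := hcs s x
    have h4 : d = Qlow s x - Qstar s x := by
      rw [hd]; exact hp
    linarith
  have hd0 : d ≤ 0 := by nlinarith
  intro s x
  have := hle s x
  linarith
end

section
/- For the confounded MDP decomposition: the interventional expected reward decomposes as R(s,x) = P(x|s)·E[f_Y(s,x,U) | f_X(s,U)=x] + P(¬x|s)·E[f_Y(s,x,U) | f_X(s,U)≠x], and consequently, since f_Y takes values in [a,b], one has the two-sided bound P(x|s)·R̃(s,x) + a·P(¬x|s) ≤ R(s,x) ≤ P(x|s)·R̃(s,x) + b·P(¬x|s). -/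
open Finset

/- Split the expectation `R(s,x)` along the event `{f_X(s,U) = x}`: each part is the mass of its
event times the conditional mean there, and the part off the event, with mass `1 - P(x|s)` and
integrand in `[a, b]`, lies between `a (1 - P(x|s))` and `b (1 - P(x|s))`. -/

section WeightedSums

variable {U : Type*} [Fintype U] (p : U → Prop) [DecidablePred p]

theorem sum_ite_add_sum_ite_not (g : U → ℝ) :
    (∑ u, if p u then g u else 0) + (∑ u, if ¬p u then g u else 0) = ∑ u, g u := by
  rw [← sum_add_distrib]
  refine sum_congr rfl fun u _ => ?_
  by_cases h : p u <;> simp [h]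

theorem sum_ite_not_eq_one_sub {μ : U → ℝ} (hμ1 : ∑ u, μ u = 1) :
    (∑ u, if ¬p u then μ u else 0) = 1 - ∑ u, if p u then μ u else 0 := by
  linarith [sum_ite_add_sum_ite_not p μ]

variable {μ f : U → ℝ} (hμ0 : ∀ u, 0 ≤ μ u)
include hμ0

theorem mul_sum_ite_le_sum_ite_mul {a : ℝ} (hfa : ∀ u, a ≤ f u) :
    a * (∑ u, if p u then μ u else 0) ≤ ∑ u, if p u then μ u * f u else 0 := by
  rw [mul_sum]
  refine sum_le_sum fun u _ => ?_
  split_ifs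
  · rw [mul_comm]
    exact mul_le_mul_of_nonneg_left (hfa u) (hμ0 u)
  · simp

theorem sum_ite_mul_le_mul_sum_ite {b : ℝ} (hfb : ∀ u, f u ≤ b) :
    (∑ u, if p u then μ u * f u else 0) ≤ b * ∑ u, if p u then μ u else 0 := by
  rw [mul_sum]
  refine sum_le_sum fun u _ => ?_
  split_ifs
  · rw [mul_comm b]
    exact mul_le_mul_of_nonneg_left (hfb u) (hμ0 u)
  · simp

end WeightedSums

theorem reward_decomposition_and_two_sided_bound_general
    {S X U : Type*} [Fintype U] [DecidableEq X]
    (a b : ℝ)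
    (μ : U → ℝ) (hμ0 : ∀ u, 0 ≤ μ u) (hμ1 : ∑ u, μ u = 1)
    (fY : S → X → U → ℝ) (hYa : ∀ s x u, a ≤ fY s x u) (hYb : ∀ s x u, fY s x u ≤ b)
    (fX : S → U → X)
    (Pb : S → X → ℝ) (hPb : ∀ s x, Pb s x = ∑ u, if fX s u = x then μ u else 0)
    (hPbpos : ∀ s x, 0 < Pb s x) (hPblt : ∀ s x, Pb s x < 1)
    (R : S → X → ℝ) (hR : ∀ s x, R s x = ∑ u, μ u * fY s x u)
    -- `R̃(s,x) = E[fY(s,x,U) ∣ fX(s,U)=x]`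
    (Rtil : S → X → ℝ)
    (hRtil : ∀ s x, Rtil s x = (∑ u, if fX s u = x then μ u * fY s x u else 0) / Pb s x)
    -- `E[fY(s,x,U) ∣ fX(s,U)≠x]`
    (Rneg : S → X → ℝ)
    (hRneg : ∀ s x,
      Rneg s x = (∑ u, if fX s u ≠ x then μ u * fY s x u else 0) / (1 - Pb s x)) :
    ∀ s x,
      R s x = Pb s x * Rtil s x + (1 - Pb s x) * Rneg s x ∧
      Pb s x * Rtil s x + a * (1 - Pb s x) ≤ R s x ∧
      R s x ≤ Pb s x * Rtil s x + b * (1 - Pb s x) := by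
  intro s x
  have hmass : 1 - Pb s x = ∑ u, if fX s u ≠ x then μ u else 0 := by
    rw [hPb, sum_ite_not_eq_one_sub _ hμ1]
  have hsplit := sum_ite_add_sum_ite_not (fun u => fX s u = x) fun u => μ u * fY s x u
  have hon : Pb s x * Rtil s x = ∑ u, if fX s u = x then μ u * fY s x u else 0 := by
    rw [hRtil, mul_div_cancel₀ _ (hPbpos s x).ne']
  have hoff : (1 - Pb s x) * Rneg s x = ∑ u, if fX s u ≠ x then μ u * fY s x u else 0 := by
    rw [hRneg, mul_div_cancel₀ _ (sub_pos.2 (hPblt s x)).ne']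
  have hlow := mul_sum_ite_le_sum_ite_mul (fun u => fX s u ≠ x) hμ0 (hYa s x)
  have hhigh := sum_ite_mul_le_mul_sum_ite (fun u => fX s u ≠ x) hμ0 (hYb s x)
  rw [← hmass] at hlow hhigh
  refine ⟨?_, ?_, ?_⟩ <;> linarith [hR s x]

/-- decomposition of the interventional expected reward, and the resulting
two-sided (Manski) bound. With `P(x|s) = P(fX(s,U)=x)` strictly between 0 and 1,
`R(s,x) = P(x|s)·E[fY(s,x,U) ∣ fX(s,U)=x] + (1 − P(x|s))·E[fY(s,x,U) ∣ fX(s,U)≠x]`,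
and since `fY ∈ [a,b]`,
`P(x|s)·R̃(s,x) + a·(1 − P(x|s)) ≤ R(s,x) ≤ P(x|s)·R̃(s,x) + b·(1 − P(x|s))`. -/
theorem reward_decomposition_and_two_sided_bound
    {S X U : Type*} [Fintype S] [Fintype X] [Fintype U] [DecidableEq X]
    (a b : ℝ)
    (μ : U → ℝ) (hμ0 : ∀ u, 0 ≤ μ u) (hμ1 : ∑ u, μ u = 1)
    (fY : S → X → U → ℝ) (hYa : ∀ s x u, a ≤ fY s x u) (hYb : ∀ s x u, fY s x u ≤ b)
    (fX : S → U → X)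
    (Pb : S → X → ℝ) (hPb : ∀ s x, Pb s x = ∑ u, if fX s u = x then μ u else 0)
    (hPbpos : ∀ s x, 0 < Pb s x) (hPblt : ∀ s x, Pb s x < 1)
    (R : S → X → ℝ) (hR : ∀ s x, R s x = ∑ u, μ u * fY s x u)
    -- `R̃(s,x) = E[fY(s,x,U) ∣ fX(s,U)=x]`
    (Rtil : S → X → ℝ)
    (hRtil : ∀ s x, Rtil s x = (∑ u, if fX s u = x then μ u * fY s x u else 0) / Pb s x)
    -- `E[fY(s,x,U) ∣ fX(s,U)≠x]`
    (Rneg : S → X → ℝ)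
    (hRneg : ∀ s x,
      Rneg s x = (∑ u, if fX s u ≠ x then μ u * fY s x u else 0) / (1 - Pb s x)) :
    ∀ s x,
      R s x = Pb s x * Rtil s x + (1 - Pb s x) * Rneg s x ∧
      Pb s x * Rtil s x + a * (1 - Pb s x) ≤ R s x ∧
      R s x ≤ Pb s x * Rtil s x + b * (1 - Pb s x) :=
  reward_decomposition_and_two_sided_bound_general a b μ hμ0 hμ1 fY hYa hYb fX Pb hPb hPbpos hPblt R
    hR Rtil hRtil Rneg hRneg
end

section
/- Quantitative comparison of fixed points: with the notation of the causal operator, if a ≤ a' then the fixed points satisfy ‖Q̲*_{a'} − Q̲*_a‖_∞ ≤ (a' − a)·max_{s,x} P(¬x|s)/(1−γ). In particular, if the behavioral policy has P(¬x|s) ≤ ε for all (s,x), the fixed point changes by at most ε(a'−a)/(1−γ) when the reward lower bound changes from a to a'. -/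
open Finset

private lemma abs_ciSup_sub_ciSup_le {ι : Type*} [Fintype ι] [Nonempty ι]
    (f g : ι → ℝ) (C : ℝ) (h : ∀ i, |f i - g i| ≤ C) :
    |(⨆ i, f i) - ⨆ i, g i| ≤ C := by
  rw [abs_sub_le_iff]
  constructor
  · rw [sub_le_iff_le_add]
    refine ciSup_le fun i => ?_
    have h1 := (abs_le.1 (h i)).2
    have h2 : g i ≤ ⨆ j, g j := le_ciSup (Set.Finite.bddAbove (Set.finite_range g)) i
    linarith
  · rw [sub_le_iff_le_add]
    refine ciSup_le fun i => ?_
    have h1 := (abs_le.1 (h i)).1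
    have h2 : f i ≤ ⨆ j, f j := le_ciSup (Set.Finite.bddAbove (Set.finite_range f)) i
    linarith

private lemma abs_ciInf_sub_ciInf_le {ι : Type*} [Fintype ι] [Nonempty ι]
    (f g : ι → ℝ) (C : ℝ) (h : ∀ i, |f i - g i| ≤ C) :
    |(⨅ i, f i) - ⨅ i, g i| ≤ C := by
  rw [abs_sub_le_iff]
  constructor
  · have h2 : (⨅ j, f j) - C ≤ ⨅ j, g j := by
      refine le_ciInf fun i => ?_
      have hle : (⨅ j, f j) ≤ f i := ciInf_le (Set.Finite.bddBelow (Set.finite_range f)) i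
      have h1 := (abs_le.1 (h i)).2
      linarith
    linarith
  · have h2 : (⨅ j, g j) - C ≤ ⨅ j, f j := by
      refine le_ciInf fun i => ?_
      have hle : (⨅ j, g j) ≤ g i := ciInf_le (Set.Finite.bddBelow (Set.finite_range g)) i
      have h1 := (abs_le.1 (h i)).1
      linarith
    linarith

/-- quantitative comparison of fixed points. If `a ≤ a'`, then
`‖Q̲*_{a'} − Q̲*_a‖_∞ ≤ (a' − a)·max_{s,x} P(¬x|s)/(1−γ)`. -/
theorem causal_fixed_point_perturbation_in_a
    {S X : Type*} [Fintype S] [Fintype X] [Nonempty S] [Nonempty X]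
    (γ a a' : ℝ) (hγ0 : 0 ≤ γ) (hγ1 : γ < 1) (haa' : a ≤ a')
    (P : S → X → ℝ) (R : S → X → ℝ) (T : S → X → S → ℝ)
    (hPpos : ∀ s x, 0 ≤ P s x) (hPsum : ∀ s, ∑ x, P s x = 1)
    (hTpos : ∀ s x s', 0 ≤ T s x s') (hTsum : ∀ s x, ∑ s', T s x s' = 1)
    (Qa : S → X → ℝ) (hQa : causalOp γ a P R T Qa = Qa)
    (Qa' : S → X → ℝ) (hQa' : causalOp γ a' P R T Qa' = Qa') :
    (⨆ p : S × X, |Qa' p.1 p.2 - Qa p.1 p.2|)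
      ≤ (a' - a) * (⨆ p : S × X, (1 - P p.1 p.2)) / (1 - γ) := by
  set D : ℝ := ⨆ p : S × X, |Qa' p.1 p.2 - Qa p.1 p.2| with hD
  set M : ℝ := ⨆ p : S × X, (1 - P p.1 p.2) with hM
  have hPle1 : ∀ s x, P s x ≤ 1 := by
    intro s x
    have := Finset.single_le_sum (f := fun x => P s x) (fun i _ => hPpos s i)
      (Finset.mem_univ x)
    rw [hPsum s] at this; exact this
  have hDmem : ∀ s x, |Qa' s x - Qa s x| ≤ D :=
    fun s x => le_ciSup (f := fun p : S × X => |Qa' p.1 p.2 - Qa p.1 p.2|)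
      (Set.Finite.bddAbove (Set.finite_range _)) (⟨s, x⟩ : S × X)
  have hMmem : ∀ s x, (1 - P s x) ≤ M :=
    fun s x => le_ciSup (f := fun p : S × X => (1 - P p.1 p.2))
      (Set.Finite.bddAbove (Set.finite_range _)) (⟨s, x⟩ : S × X)
  -- pointwise bound on the difference of the sups over actions
  have hd : ∀ s', |(⨆ x', Qa' s' x') - ⨆ x', Qa s' x'| ≤ D := fun s' =>
    abs_ciSup_sub_ciSup_le _ _ D (fun x' => hDmem s' x')
  have hA : |(⨅ s', ⨆ x', Qa' s' x') - ⨅ s', ⨆ x', Qa s' x'| ≤ D :=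
    abs_ciInf_sub_ciInf_le _ _ D hd
  -- the key pointwise estimate
  have key : ∀ s x, |Qa' s x - Qa s x| ≤ γ * D + (a' - a) * M := by
    intro s x
    have h1 := congrFun (congrFun hQa s) x
    have h2 := congrFun (congrFun hQa' s) x
    simp only [causalOp] at h1 h2
    have hdiff : Qa' s x - Qa s x
        = P s x * (γ * ∑ s', T s x s' * ((⨆ x', Qa' s' x') - ⨆ x', Qa s' x'))
          + (1 - P s x) * ((a' - a)
            + γ * ((⨅ s', ⨆ x', Qa' s' x') - ⨅ s', ⨆ x', Qa s' x')) := by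
      rw [← h1, ← h2]
      have hs : ∑ s', T s x s' * ((⨆ x', Qa' s' x') - ⨆ x', Qa s' x')
          = (∑ s', T s x s' * ⨆ x', Qa' s' x') - ∑ s', T s x s' * ⨆ x', Qa s' x' := by
        rw [← Finset.sum_sub_distrib]
        exact Finset.sum_congr rfl fun _ _ => mul_sub _ _ _
      rw [hs]; ring
    have hsum : |∑ s', T s x s' * ((⨆ x', Qa' s' x') - ⨆ x', Qa s' x')| ≤ D := by
      calc |∑ s', T s x s' * ((⨆ x', Qa' s' x') - ⨆ x', Qa s' x')|
          ≤ ∑ s', |T s x s' * ((⨆ x', Qa' s' x') - ⨆ x', Qa s' x')| :=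
            Finset.abs_sum_le_sum_abs _ _
        _ ≤ ∑ s', T s x s' * D := by
            refine Finset.sum_le_sum fun s' _ => ?_
            rw [abs_mul, abs_of_nonneg (hTpos s x s')]
            exact mul_le_mul_of_nonneg_left (hd s') (hTpos s x s')
        _ = D := by rw [← Finset.sum_mul, hTsum s x, one_mul]
    have hP0 := hPpos s x
    have hP1 := hPle1 s x
    have hD0 : 0 ≤ D := le_trans (abs_nonneg _) (hDmem s x)
    calc |Qa' s x - Qa s x|
        ≤ P s x * (γ * D) + (1 - P s x) * ((a' - a) + γ * D) := by
          rw [hdiff]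
          refine (abs_add_le _ _).trans (add_le_add ?_ ?_)
          · rw [abs_mul, abs_of_nonneg hP0, abs_mul, abs_of_nonneg hγ0]
            exact mul_le_mul_of_nonneg_left
              (mul_le_mul_of_nonneg_left hsum hγ0) hP0
          · rw [abs_mul, abs_of_nonneg (by linarith : (0:ℝ) ≤ 1 - P s x)]
            refine mul_le_mul_of_nonneg_left ?_ (by linarith)
            refine (abs_add_le _ _).trans (add_le_add ?_ ?_)
            · rw [abs_of_nonneg (by linarith : (0:ℝ) ≤ a' - a)]
            · rw [abs_mul, abs_of_nonneg hγ0]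
              exact mul_le_mul_of_nonneg_left hA hγ0
      _ = γ * D + (1 - P s x) * (a' - a) := by ring
      _ ≤ γ * D + (a' - a) * M := by
          have := mul_le_mul_of_nonneg_right (hMmem s x) (by linarith : (0:ℝ) ≤ a' - a)
          linarith [this]
  have hDle : D ≤ γ * D + (a' - a) * M :=
    ciSup_le fun p => key p.1 p.2
  have hγpos : (0:ℝ) < 1 - γ := by linarith
  rw [le_div_iff₀ hγpos]
  nlinarith [hDle]
end
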